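/- For every integer n ≥ 3, the normalizer in the group S³ of unit quaternions of the binary dihedral subgroup D*_{4n} = C_{2n} ∪ C_{2n}·j (of order 4n) is exactly D*_{8n} = C_{4n} ∪ C_{4n}·j (of order 8n). -/

import Mathlib

open Quaternion

noncomputable section

/-- The group `S³` of unit quaternions. -/
abbrev S3 : Type := Metric.sphere (0 : Quaternion ℝ) 1

theorem norm_one_of {q : ℍ[ℝ]} (h : Quaternion.normSq q = 1) : ‖q‖ = 1 := by
  have h2 : ‖q‖ * ‖q‖ = 1 := by rw [← Quaternion.normSq_eq_norm_mul_self, h]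
  rcases mul_self_eq_one_iff.mp h2 with h | h
  · exact h
  · nlinarith [norm_nonneg q]

/-- The unit quaternion `a + b·i + c·j + d·k`. -/
def mkS (a b c d : ℝ) (h : a ^ 2 + b ^ 2 + c ^ 2 + d ^ 2 = 1) : S3 :=
  ⟨⟨a, b, c, d⟩, by
    apply mem_sphere_zero_iff_norm.mpr
    apply norm_one_of
    erw [Quaternion.normSq_def']
    exact h⟩

/-- The unit quaternion `cos θ + sin θ · i`. -/
def eS (θ : ℝ) : S3 :=
  mkS (Real.cos θ) (Real.sin θ) 0 0 (by
    have := Real.cos_sq_add_sin_sq θ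
    nlinarith)

/-- The unit quaternion `i`. -/
def iS : S3 := mkS 0 1 0 0 (by norm_num)

/-- The unit quaternion `j`. -/
def jS : S3 := mkS 0 0 1 0 (by norm_num)

/-- The generator `cos(2π/n) + sin(2π/n)·i` of the cyclic group `C_n`. -/
def Cgen (n : ℕ) : S3 := eS (2 * Real.pi / n)

/-- The binary dihedral group `D*_{4n} = C_{2n} ∪ C_{2n}·j`,
generated by `cos(π/n) + sin(π/n)·i` and `j`. -/
def Dstar (n : ℕ) : Subgroup S3 := Subgroup.closure {Cgen (2 * n), jS}

section Aux
open Real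

lemma coe_mkS (a b c d : ℝ) (h) : ((mkS a b c d h : S3) : ℍ[ℝ]) = ⟨a,b,c,d⟩ := rfl

lemma eS_mul (α β : ℝ) : eS α * eS β = eS (α + β) := by
  apply Subtype.ext
  rw [Metric.unitSphere.coe_mul]
  show (⟨cos α, sin α, 0, 0⟩ : ℍ[ℝ]) * ⟨cos β, sin β, 0, 0⟩ = ⟨cos (α+β), sin (α+β), 0, 0⟩
  ext <;> simp [Real.cos_add, Real.sin_add] <;> ring

lemma eS_zero : eS 0 = 1 := by
  apply Subtype.ext
  rw [Metric.unitSphere.coe_one]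
  show (⟨cos 0, sin 0, 0, 0⟩ : ℍ[ℝ]) = 1
  ext <;> simp

lemma eS_inv (θ : ℝ) : (eS θ)⁻¹ = eS (-θ) := by
  symm; rw [eq_inv_iff_mul_eq_one, eS_mul]
  simp [eS_zero]

lemma jS_mul_eS (θ : ℝ) : jS * eS θ = eS (-θ) * jS := by
  apply Subtype.ext
  rw [Metric.unitSphere.coe_mul, Metric.unitSphere.coe_mul]
  show (⟨0,0,1,0⟩ : ℍ[ℝ]) * ⟨cos θ, sin θ, 0, 0⟩ = (⟨cos (-θ), sin (-θ), 0, 0⟩ : ℍ[ℝ]) * ⟨0,0,1,0⟩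
  ext <;> simp

lemma jS_jS : jS * jS = eS π := by
  apply Subtype.ext
  rw [Metric.unitSphere.coe_mul]
  show (⟨0,0,1,0⟩ : ℍ[ℝ]) * ⟨0,0,1,0⟩ = ⟨cos π, sin π, 0, 0⟩
  ext <;> simp

lemma eS_two_pi_add (θ : ℝ) : eS (θ + 2*π) = eS θ := by
  apply Subtype.ext
  show (⟨cos (θ+2*π), sin (θ+2*π), 0, 0⟩ : ℍ[ℝ]) = ⟨cos θ, sin θ, 0, 0⟩
  rw [Real.cos_add_two_pi, Real.sin_add_two_pi]

lemma eS_zpow (θ : ℝ) (k : ℤ) : eS θ ^ k = eS (k * θ) := by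
  have hp : ∀ m : ℕ, eS θ ^ m = eS (m * θ) := by
    intro m
    induction m with
    | zero => simp [eS_zero]
    | succ l ih => rw [pow_succ, ih, eS_mul]; congr 1; push_cast; ring
  rcases k with m | m
  · simpa using hp m
  · rw [zpow_negSucc, hp, eS_inv]
    congr 1
    push_cast; ring

lemma eSj_inv (θ : ℝ) : (eS θ * jS)⁻¹ = eS (θ + π) * jS := by
  symm; rw [eq_inv_iff_mul_eq_one]
  calc eS (θ+π) * jS * (eS θ * jS) = eS (θ+π) * (jS * eS θ) * jS := by group
    _ = eS (θ+π) * (eS (-θ) * jS) * jS := by rw [jS_mul_eS]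
    _ = eS (θ+π) * eS (-θ) * (jS * jS) := by group
    _ = eS π * eS π := by rw [eS_mul, jS_jS]; ring_nf
    _ = 1 := by rw [eS_mul, show π + π = 0 + 2*π by ring, eS_two_pi_add, eS_zero]

lemma conj_ee (α β : ℝ) : eS α * eS β * (eS α)⁻¹ = eS β := by
  rw [eS_inv, eS_mul, eS_mul]; congr 1; ring

lemma conj_ej (α β : ℝ) : eS α * (eS β * jS) * (eS α)⁻¹ = eS (2*α + β) * jS := by
  rw [eS_inv, show eS α * (eS β * jS) * eS (-α) = eS α * eS β * (jS * eS (-α)) by group,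
    jS_mul_eS, eS_mul, show eS (α+β) * (eS (- -α) * jS) = eS (α+β) * eS (- -α) * jS by group,
    eS_mul]
  congr 2; ring

lemma conj_je (α β : ℝ) : (eS α * jS) * eS β * (eS α * jS)⁻¹ = eS (-β) := by
  rw [eSj_inv, show eS α * jS * eS β * (eS (α+π) * jS) = eS α * (jS * eS β) * eS (α+π) * jS by group,
    jS_mul_eS, show eS α * (eS (-β) * jS) * eS (α+π) * jS = eS α * eS (-β) * (jS * eS (α+π)) * jS by group,
    jS_mul_eS, eS_mul,
    show eS (α + -β) * (eS (-(α+π)) * jS) * jS = eS (α + -β) * eS (-(α+π)) * (jS * jS) by group,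
    eS_mul, jS_jS, eS_mul, show α + -β + -(α+π) + π = -β by ring]

lemma conj_jj (α β : ℝ) : (eS α * jS) * (eS β * jS) * (eS α * jS)⁻¹ = eS (2*α - β) * jS := by
  rw [eSj_inv, show eS α * jS * (eS β * jS) * (eS (α+π) * jS) = eS α * (jS * eS β) * (jS * eS (α+π)) * jS by group,
    jS_mul_eS, jS_mul_eS,
    show eS α * (eS (-β) * jS) * (eS (-(α+π)) * jS) * jS = eS α * eS (-β) * (jS * eS (-(α+π))) * (jS * jS) by group,
    jS_mul_eS, jS_jS, eS_mul,
    show eS (α + -β) * (eS (- -(α+π)) * jS) * eS π = eS (α + -β) * eS (- -(α+π)) * (jS * eS π) by group,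
    jS_mul_eS, eS_mul,
    show eS (α + -β + - -(α+π)) * (eS (-π) * jS) = eS (α + -β + - -(α+π)) * eS (-π) * jS by group,
    eS_mul, show α + -β + - -(α+π) + -π = 2*α - β by ring]


def Dset (n : ℕ) (hn : (n:ℝ) ≠ 0) : Subgroup S3 where
  carrier := {q | ∃ k : ℤ, q = eS (k * π / n) ∨ q = eS (k * π / n) * jS}
  one_mem' := ⟨0, Or.inl (by rw [← eS_zero]; congr 1; push_cast; ring)⟩
  mul_mem' := by
    rintro x y ⟨k, hk | hk⟩ ⟨m, hm | hm⟩ <;> subst hk hm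
    · exact ⟨k + m, Or.inl (by rw [eS_mul]; congr 1; push_cast; ring)⟩
    · exact ⟨k + m, Or.inr (by rw [show eS (k*π/n) * (eS (m*π/n) * jS) = eS (k*π/n) * eS (m*π/n) * jS by group, eS_mul]; congr 2; push_cast; ring)⟩
    · refine ⟨k - m, Or.inr ?_⟩
      rw [show eS (k*π/n) * jS * eS (m*π/n) = eS (k*π/n) * (jS * eS (m*π/n)) by group,
        jS_mul_eS, show eS (k*π/n) * (eS (-(m*π/n)) * jS) = eS (k*π/n) * eS (-(m*π/n)) * jS by group,
        eS_mul]
      congr 2; push_cast; ring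
    · refine ⟨k - m + n, Or.inl ?_⟩
      rw [show eS (k*π/n) * jS * (eS (m*π/n) * jS) = eS (k*π/n) * (jS * eS (m*π/n)) * jS by group,
        jS_mul_eS, show eS (k*π/n) * (eS (-(m*π/n)) * jS) * jS = eS (k*π/n) * eS (-(m*π/n)) * (jS * jS) by group,
        eS_mul, jS_jS, eS_mul]
      congr 1; push_cast; field_simp; ring
  inv_mem' := by
    rintro x ⟨k, hk | hk⟩ <;> subst hk
    · exact ⟨-k, Or.inl (by rw [eS_inv]; congr 1; push_cast; ring)⟩
    · refine ⟨k + n, Or.inr ?_⟩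
      rw [eSj_inv]
      congr 2; push_cast; field_simp

lemma Dstar_eq_Dset (n : ℕ) (hn : (n:ℝ) ≠ 0) : Dstar n = Dset n hn := by
  apply le_antisymm
  · rw [Dstar, Subgroup.closure_le]
    rintro x hx
    simp only [Set.mem_insert_iff, Set.mem_singleton_iff] at hx
    rcases hx with rfl | rfl
    · exact ⟨1, Or.inl (by unfold Cgen; congr 1; push_cast; field_simp)⟩
    · exact ⟨0, Or.inr (by rw [show ((0:ℤ):ℝ)*π/n = 0 by push_cast; ring, eS_zero, one_mul])⟩
  · rintro x ⟨k, hk | hk⟩ <;> subst hk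
    · rw [show eS (k*π/n) = Cgen (2*n) ^ k by
        unfold Cgen; rw [eS_zpow]; congr 1; push_cast; field_simp]
      exact zpow_mem (Subgroup.subset_closure (by simp)) k
    · rw [show eS (k*π/n) = Cgen (2*n) ^ k by
        unfold Cgen; rw [eS_zpow]; congr 1; push_cast; field_simp]
      exact mul_mem (zpow_mem (Subgroup.subset_closure (by simp)) k)
        (Subgroup.subset_closure (by simp))

lemma mem_normalizer_of {G : Type*} [Group G] {H : Subgroup G} {x : G}
    (h1 : ∀ h ∈ H, x*h*x⁻¹ ∈ H) (h2 : ∀ h ∈ H, x⁻¹*h*x ∈ H) : x ∈ Subgroup.normalizer (H : Set G) := by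
  rw [Subgroup.mem_normalizer_iff]
  intro g
  refine ⟨fun hg => h1 g hg, fun hg => ?_⟩
  have h3 := h2 _ hg
  rwa [show x⁻¹*(x*g*x⁻¹)*x = g by group] at h3

lemma conj_mem (n : ℕ) (hn : (n:ℝ) ≠ 0) (hn2 : ((2*n:ℕ):ℝ) ≠ 0) :
    ∀ x ∈ Dset (2*n) hn2, ∀ h ∈ Dset n hn, x * h * x⁻¹ ∈ Dset n hn := by
  rintro x ⟨k, hk | hk⟩ h ⟨m, hm | hm⟩ <;> subst hk hm
  · rw [conj_ee]; exact ⟨m, Or.inl rfl⟩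
  · rw [conj_ej]; exact ⟨k+m, Or.inr (by congr 2; push_cast; field_simp)⟩
  · rw [conj_je]; exact ⟨-m, Or.inl (by congr 1; push_cast; ring)⟩
  · rw [conj_jj]; exact ⟨k-m, Or.inr (by congr 2; push_cast; field_simp)⟩

lemma easy_incl (n : ℕ) (hn : (n:ℝ) ≠ 0) (hn2 : ((2*n:ℕ):ℝ) ≠ 0) :
    Dset (2*n) hn2 ≤ Subgroup.normalizer (Dset n hn : Set S3) := by
  intro x hx
  refine mem_normalizer_of (conj_mem n hn hn2 x hx) ?_
  intro h hh
  have := conj_mem n hn hn2 x⁻¹ (inv_mem hx) h hh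
  rwa [inv_inv] at this

lemma eq_add_int_two_pi {x y : ℝ} (hc : Real.cos x = Real.cos y)
    (hs : Real.sin x = Real.sin y) : ∃ m : ℤ, x = y + m * (2*π) := by
  have he : Complex.exp (x * Complex.I) = Complex.exp (y * Complex.I) := by
    rw [Complex.exp_mul_I, Complex.exp_mul_I, ← Complex.ofReal_cos, ← Complex.ofReal_cos,
      ← Complex.ofReal_sin, ← Complex.ofReal_sin, hc, hs]
  obtain ⟨m, hm⟩ := Complex.exp_eq_exp_iff_exists_int.mp he
  refine ⟨m, ?_⟩
  have h2 : (x : ℂ) * Complex.I = (y + m * (2*π)) * Complex.I := by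
    rw [hm]; push_cast; ring
  have h3 : (x : ℂ) = (y + m * (2*π) : ℝ) := by
    have := mul_right_cancel₀ Complex.I_ne_zero h2
    rw [this]; push_cast; ring
  exact_mod_cast h3

lemma half_of_sq {a b : ℝ} (hab : a^2 + b^2 = 1) (ψ : ℝ)
    (hc : a^2 - b^2 = Real.cos ψ) (hs : 2*(a*b) = Real.sin ψ) :
    ∃ m : ℤ, a = Real.cos (ψ/2 + m*π) ∧ b = Real.sin (ψ/2 + m*π) := by
  set z : ℂ := ⟨a, b⟩ with hz
  have habs : ‖z‖ = 1 := by
    rw [Complex.norm_def, Complex.normSq_mk]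
    rw [show a*a + b*b = 1 by nlinarith]
    exact Real.sqrt_one
  have hz0 : z ≠ 0 := by
    intro h; rw [h] at habs; simp at habs
  have ha : Real.cos z.arg = a := by rw [Complex.cos_arg hz0, habs]; simp [hz]
  have hb : Real.sin z.arg = b := by rw [Complex.sin_arg, habs]; simp [hz]
  have hcc : Real.cos (2 * z.arg) = Real.cos ψ := by
    rw [Real.cos_two_mul, ha]; nlinarith
  have hss : Real.sin (2 * z.arg) = Real.sin ψ := by
    rw [Real.sin_two_mul, ha, hb]; nlinarith
  obtain ⟨m, hm⟩ := eq_add_int_two_pi hcc hss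
  have harg : z.arg = ψ/2 + m*π := by linarith
  exact ⟨m, by rw [← harg, ha], by rw [← harg, hb]⟩

end Aux

section Hard
open Real

@[simp] lemma eS_re (θ : ℝ) : ((eS θ : S3) : ℍ[ℝ]).re = Real.cos θ := rfl
@[simp] lemma eS_imI (θ : ℝ) : ((eS θ : S3) : ℍ[ℝ]).imI = Real.sin θ := rfl
@[simp] lemma eS_imJ (θ : ℝ) : ((eS θ : S3) : ℍ[ℝ]).imJ = 0 := rfl
@[simp] lemma eS_imK (θ : ℝ) : ((eS θ : S3) : ℍ[ℝ]).imK = 0 := rfl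
@[simp] lemma jS_re : ((jS : S3) : ℍ[ℝ]).re = 0 := rfl
@[simp] lemma jS_imI : ((jS : S3) : ℍ[ℝ]).imI = 0 := rfl
@[simp] lemma jS_imJ : ((jS : S3) : ℍ[ℝ]).imJ = 1 := rfl
@[simp] lemma jS_imK : ((jS : S3) : ℍ[ℝ]).imK = 0 := rfl

set_option maxHeartbeats 1000000 in
lemma hard_incl (n : ℕ) (hn : 3 ≤ n) (hn' : (n:ℝ) ≠ 0) (hn2 : ((2*n:ℕ):ℝ) ≠ 0) :
    Subgroup.normalizer (Dset n hn' : Set S3) ≤ Dset (2*n) hn2 := by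
  intro q hq
  have hnn : (3:ℝ) ≤ n := by exact_mod_cast hn
  have hπn_pos : 0 < π / n := by positivity
  have hπn_lt : π / n < π / 2 := by
    apply div_lt_div_of_pos_left Real.pi_pos (by norm_num) (by linarith)
  have hp : 0 < Real.cos (π/n) := Real.cos_pos_of_mem_Ioo ⟨by linarith, hπn_lt⟩
  have hs : 0 < Real.sin (π/n) :=
    Real.sin_pos_of_pos_of_lt_pi hπn_pos (by linarith [Real.pi_pos])
  have hCgen : Cgen (2*n) = eS (π/n) := by
    unfold Cgen; congr 1; push_cast; field_simp
  have hC : Cgen (2*n) ∈ Dset n hn' := ⟨1, Or.inl (by rw [hCgen]; congr 1; push_cast; ring)⟩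
  have hj : jS ∈ Dset n hn' :=
    ⟨0, Or.inr (by rw [show ((0:ℤ):ℝ)*π/n = 0 by push_cast; ring, eS_zero, one_mul])⟩
  have h1 := (Subgroup.mem_normalizer_iff.mp hq (Cgen (2*n))).mp hC
  have h2 := (Subgroup.mem_normalizer_iff.mp hq jS).mp hj
  rw [hCgen] at h1
  have hq1 : (q : ℍ[ℝ]).re^2 + (q : ℍ[ℝ]).imI^2 + (q : ℍ[ℝ]).imJ^2
      + (q : ℍ[ℝ]).imK^2 = 1 := by
    have hnq : ‖(q : ℍ[ℝ])‖ = 1 := mem_sphere_zero_iff_norm.mp q.2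
    have : Quaternion.normSq (q : ℍ[ℝ]) = 1 := by
      rw [Quaternion.normSq_eq_norm_mul_self, hnq, one_mul]
    rwa [Quaternion.normSq_def'] at this
  obtain ⟨k, hk | hk⟩ := h1
  · have E : (q : ℍ[ℝ]) * ((eS (π/n) : S3) : ℍ[ℝ])
        = ((eS (k*π/n) : S3) : ℍ[ℝ]) * (q : ℍ[ℝ]) := by
      have h3 := congrArg Subtype.val (mul_inv_eq_iff_eq_mul.mp hk)
      rw [Metric.unitSphere.coe_mul, Metric.unitSphere.coe_mul] at h3
      exact h3
    have e1 := congrArg QuaternionAlgebra.re E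
    have e2 := congrArg QuaternionAlgebra.imI E
    have e3 := congrArg QuaternionAlgebra.imJ E
    have e4 := congrArg QuaternionAlgebra.imK E
    simp only [Quaternion.re_mul, Quaternion.imI_mul, Quaternion.imJ_mul,
      Quaternion.imK_mul, eS_re, eS_imI, eS_imJ, eS_imK] at e1 e2 e3 e4
    -- abbreviations in comments: a=(↑q).re, b=imI, c=imJ, d=imK, p=cos(π/n), s=sin(π/n)
    have hcase : ((q:ℍ[ℝ]).imJ = 0 ∧ (q:ℍ[ℝ]).imK = 0) ∨ ((q:ℍ[ℝ]).re = 0 ∧ (q:ℍ[ℝ]).imI = 0) := by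
      rcases eq_or_ne ((q:ℍ[ℝ]).imJ^2 + (q:ℍ[ℝ]).imK^2) 0 with h0 | h0
      · exact Or.inl ⟨by nlinarith [sq_nonneg (q:ℍ[ℝ]).imJ, sq_nonneg (q:ℍ[ℝ]).imK],
          by nlinarith [sq_nonneg (q:ℍ[ℝ]).imJ, sq_nonneg (q:ℍ[ℝ]).imK]⟩
      · have hS2 : Real.sin (k*π/n) * ((q:ℍ[ℝ]).imJ^2 + (q:ℍ[ℝ]).imK^2)
            = (-Real.sin (π/n)) * ((q:ℍ[ℝ]).imJ^2 + (q:ℍ[ℝ]).imK^2) := by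
          linear_combination (q:ℍ[ℝ]).imK*e3 - (q:ℍ[ℝ]).imJ*e4
        have hSs : Real.sin (k*π/n) = -Real.sin (π/n) := mul_right_cancel₀ h0 hS2
        have hS1 : Real.sin (π/n) * ((q:ℍ[ℝ]).re^2 + (q:ℍ[ℝ]).imI^2)
            = Real.sin (k*π/n) * ((q:ℍ[ℝ]).re^2 + (q:ℍ[ℝ]).imI^2) := by
          linear_combination (q:ℍ[ℝ]).re*e2 - (q:ℍ[ℝ]).imI*e1
        rw [hSs] at hS1
        have ht1 : (q:ℍ[ℝ]).re^2 + (q:ℍ[ℝ]).imI^2 = 0 := by nlinarith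
        exact Or.inr ⟨by nlinarith [sq_nonneg (q:ℍ[ℝ]).re, sq_nonneg (q:ℍ[ℝ]).imI],
          by nlinarith [sq_nonneg (q:ℍ[ℝ]).re, sq_nonneg (q:ℍ[ℝ]).imI]⟩
    clear e1 e2 e3 e4 E hk
    rcases hcase with ⟨hc, hd⟩ | ⟨ha, hb⟩
    · -- Case A : q = a + b i
      have hab : (q:ℍ[ℝ]).re^2 + (q:ℍ[ℝ]).imI^2 = 1 := by rw [hc, hd] at hq1; linarith [hq1]
      obtain ⟨m, hm | hm⟩ := h2
      · exfalso
        have E2 : (q : ℍ[ℝ]) * ((jS : S3) : ℍ[ℝ])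
            = ((eS (m*π/n) : S3) : ℍ[ℝ]) * (q : ℍ[ℝ]) := by
          have h3 := congrArg Subtype.val (mul_inv_eq_iff_eq_mul.mp hm)
          rw [Metric.unitSphere.coe_mul, Metric.unitSphere.coe_mul] at h3
          exact h3
        have f3 := congrArg QuaternionAlgebra.imJ E2
        have f4 := congrArg QuaternionAlgebra.imK E2
        simp only [Quaternion.imJ_mul, Quaternion.imK_mul, eS_re, eS_imI, eS_imJ, eS_imK,
          jS_re, jS_imI, jS_imJ, jS_imK, hc, hd] at f3 f4
        nlinarith [f3, f4, hab]
      · have E2 : (q : ℍ[ℝ]) * ((jS : S3) : ℍ[ℝ])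
            = ((eS (m*π/n) : S3) : ℍ[ℝ]) * ((jS : S3) : ℍ[ℝ]) * (q : ℍ[ℝ]) := by
          have h3 := congrArg Subtype.val (mul_inv_eq_iff_eq_mul.mp hm)
          rw [Metric.unitSphere.coe_mul, Metric.unitSphere.coe_mul, Metric.unitSphere.coe_mul] at h3
          exact h3
        have f3 := congrArg QuaternionAlgebra.imJ E2
        have f4 := congrArg QuaternionAlgebra.imK E2
        simp only [Quaternion.imJ_mul, Quaternion.imK_mul, Quaternion.re_mul, Quaternion.imI_mul,
          eS_re, eS_imI, eS_imJ, eS_imK, jS_re, jS_imI, jS_imJ, jS_imK, hc, hd] at f3 f4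
        have hc2 : (q:ℍ[ℝ]).re^2 - (q:ℍ[ℝ]).imI^2 = Real.cos (m*π/n) := by
          linear_combination (q:ℍ[ℝ]).re*f3 - (q:ℍ[ℝ]).imI*f4 + Real.cos (m*π/n)*hab
        have hs2 : 2*((q:ℍ[ℝ]).re*(q:ℍ[ℝ]).imI) = Real.sin (m*π/n) := by
          linear_combination (q:ℍ[ℝ]).imI*f3 + (q:ℍ[ℝ]).re*f4 + Real.sin (m*π/n)*hab
        obtain ⟨M, hA, hB⟩ := half_of_sq hab (m*π/n) hc2 hs2
        refine ⟨m + 2*n*M, Or.inl ?_⟩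
        have hang : ((m + 2*n*M : ℤ) : ℝ)*π/((2*n : ℕ):ℝ) = (m*π/n)/2 + M*π := by
          push_cast; field_simp
        apply Subtype.ext
        rw [hang]
        apply Quaternion.ext <;> simp [eS_re, eS_imI, eS_imJ, eS_imK, ← hA, ← hB, hc, hd]
    · -- Case B : q = c j + d k
      have hcd : (q:ℍ[ℝ]).imJ^2 + (q:ℍ[ℝ]).imK^2 = 1 := by rw [ha, hb] at hq1; linarith [hq1]
      obtain ⟨m, hm | hm⟩ := h2
      · exfalso
        have E2 : (q : ℍ[ℝ]) * ((jS : S3) : ℍ[ℝ])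
            = ((eS (m*π/n) : S3) : ℍ[ℝ]) * (q : ℍ[ℝ]) := by
          have h3 := congrArg Subtype.val (mul_inv_eq_iff_eq_mul.mp hm)
          rw [Metric.unitSphere.coe_mul, Metric.unitSphere.coe_mul] at h3
          exact h3
        have f1 := congrArg QuaternionAlgebra.re E2
        have f2 := congrArg QuaternionAlgebra.imI E2
        simp only [Quaternion.re_mul, Quaternion.imI_mul, eS_re, eS_imI, eS_imJ, eS_imK,
          jS_re, jS_imI, jS_imJ, jS_imK, ha, hb] at f1 f2
        nlinarith [f1, f2, hcd]
      · have E2 : (q : ℍ[ℝ]) * ((jS : S3) : ℍ[ℝ])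
            = ((eS (m*π/n) : S3) : ℍ[ℝ]) * ((jS : S3) : ℍ[ℝ]) * (q : ℍ[ℝ]) := by
          have h3 := congrArg Subtype.val (mul_inv_eq_iff_eq_mul.mp hm)
          rw [Metric.unitSphere.coe_mul, Metric.unitSphere.coe_mul, Metric.unitSphere.coe_mul] at h3
          exact h3
        have f1 := congrArg QuaternionAlgebra.re E2
        have f2 := congrArg QuaternionAlgebra.imI E2
        simp only [Quaternion.re_mul, Quaternion.imI_mul, Quaternion.imJ_mul, Quaternion.imK_mul,
          eS_re, eS_imI, eS_imJ, eS_imK, jS_re, jS_imI, jS_imJ, jS_imK, ha, hb] at f1 f2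
        have hc2 : (q:ℍ[ℝ]).imJ^2 - (q:ℍ[ℝ]).imK^2 = Real.cos (m*π/n) := by
          linear_combination -(q:ℍ[ℝ]).imJ*f1 + (q:ℍ[ℝ]).imK*f2 + Real.cos (m*π/n)*hcd
        have hs2 : 2*((q:ℍ[ℝ]).imJ*(q:ℍ[ℝ]).imK) = Real.sin (m*π/n) := by
          linear_combination -(q:ℍ[ℝ]).imK*f1 - (q:ℍ[ℝ]).imJ*f2 + Real.sin (m*π/n)*hcd
        obtain ⟨M, hA, hB⟩ := half_of_sq hcd (m*π/n) hc2 hs2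
        refine ⟨m + 2*n*M, Or.inr ?_⟩
        have hang : ((m + 2*n*M : ℤ) : ℝ)*π/((2*n : ℕ):ℝ) = (m*π/n)/2 + M*π := by
          push_cast; field_simp
        apply Subtype.ext
        rw [hang, Metric.unitSphere.coe_mul]
        apply Quaternion.ext <;>
          simp [Quaternion.re_mul, Quaternion.imI_mul, Quaternion.imJ_mul, Quaternion.imK_mul,
            eS_re, eS_imI, eS_imJ, eS_imK, jS_re, jS_imI, jS_imJ, jS_imK, ← hA, ← hB, ha, hb]
  · exfalso
    have E : (q : ℍ[ℝ]) * ((eS (π/n) : S3) : ℍ[ℝ])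
        = ((eS (k*π/n) : S3) : ℍ[ℝ]) * ((jS : S3) : ℍ[ℝ]) * (q : ℍ[ℝ]) := by
      have h3 := congrArg Subtype.val (mul_inv_eq_iff_eq_mul.mp hk)
      rw [Metric.unitSphere.coe_mul, Metric.unitSphere.coe_mul, Metric.unitSphere.coe_mul] at h3
      exact h3
    have e1 := congrArg QuaternionAlgebra.re E
    have e2 := congrArg QuaternionAlgebra.imI E
    have e3 := congrArg QuaternionAlgebra.imJ E
    have e4 := congrArg QuaternionAlgebra.imK E
    simp only [Quaternion.re_mul, Quaternion.imI_mul, Quaternion.imJ_mul, Quaternion.imK_mul,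
      eS_re, eS_imI, eS_imJ, eS_imK, jS_re, jS_imI, jS_imJ, jS_imK] at e1 e2 e3 e4
    have hp0 : Real.cos (π/n) = 0 := by
      linear_combination (q:ℍ[ℝ]).re*e1 + (q:ℍ[ℝ]).imI*e2 + (q:ℍ[ℝ]).imJ*e3
        + (q:ℍ[ℝ]).imK*e4 - Real.cos (π/n)*hq1
    linarith
end Hard

/-- For `n ≥ 3`, the normalizer in `S³` of the binary dihedral group
`D*_{4n} = C_{2n} ∪ C_{2n}·j` is exactly `D*_{8n} = C_{4n} ∪ C_{4n}·j`. -/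
theorem normalizer_binary_dihedral (n : ℕ) (hn : 3 ≤ n) :
    Subgroup.normalizer (Dstar n : Set S3) = Dstar (2 * n) := by
  have hn' : (n:ℝ) ≠ 0 := Nat.cast_ne_zero.mpr (by omega)
  have hn2 : ((2*n:ℕ):ℝ) ≠ 0 := Nat.cast_ne_zero.mpr (by omega)
  rw [Dstar_eq_Dset n hn', Dstar_eq_Dset (2*n) hn2]
  exact le_antisymm (hard_incl n hn hn' hn2) (easy_incl n hn' hn2)
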